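/- For the Schrödinger approximation ψ_app(x,y,z) = e^{i k_z z} w(εx, εy, ε²z) with w(·,Z) ∈ H^{s_A}(ℝ²) and s_A ≥ s, there is a constant C > 0, independent of ε ∈ (0,1), such that ‖(I - P_hyp)ψ_app(·,·,z)‖_{H^s(dx,dy)} ≤ C ε^{s_A - 1} ‖w(·,ε²z)‖_{H^{s_A}} for all z. -/

import Mathlib

/-!
On the support of `1 - χ` we have `|k|² > ω²/2`, so there the weight `(1 + |k|²)^{s/2}` is at
most a constant times `|k|^{s_A} = ε^{s_A} |k/ε|^{s_A} ≤ ε^{s_A} (1 + |k/ε|²)^{s_A/2}`. The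
remaining `ε⁻²` from the rescaled transform meets the factor `ε` that the substitution
`k ↦ k/ε` contributes to an `L²(ℝ²)` norm, leaving `ε^{s_A - 1}`.
-/

open MeasureTheory Complex
open scoped FourierTransform ENNReal

noncomputable section

abbrev E2 := EuclideanSpace ℝ (Fin 2)

/-- The `H^s` norm `‖(1+|k|²)^{s/2} û‖_{L²}`. -/
def hsNorm (s : ℝ) (u : E2 → ℂ) : ℝ≥0∞ :=
  eLpNorm (fun k : E2 => ((1 + ‖k‖ ^ 2) ^ (s / 2) : ℝ) • 𝓕 u k) 2 volume

/-- Characteristic function of the ball `{|k|² ≤ ω²/2}`. -/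
def chi (ω : ℝ) (k : E2) : ℝ := if ‖k‖ ^ 2 ≤ ω ^ 2 / 2 then 1 else 0

theorem one_add_rpow_le_mul_rpow_of_lt {b t s r : ℝ} (hb : 0 < b) (hbt : b < t) (hs : 0 ≤ s)
    (hsr : s ≤ r) : (1 + t) ^ s ≤ (1 + b⁻¹) ^ s * b ^ (s - r) * t ^ r := by
  have ht : 0 < t := hb.trans hbt
  have h_one_add : 1 + t ≤ (1 + b⁻¹) * t := by
    have : 1 ≤ t / b := (one_le_div hb).2 hbt.le
    rw [div_eq_mul_inv] at this
    nlinarith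
  calc (1 + t) ^ s ≤ ((1 + b⁻¹) * t) ^ s := Real.rpow_le_rpow (by positivity) h_one_add hs
    _ = (1 + b⁻¹) ^ s * (t ^ (s - r) * t ^ r) := by
        rw [Real.mul_rpow (by positivity) ht.le, ← Real.rpow_add ht, sub_add_cancel]
    _ ≤ (1 + b⁻¹) ^ s * (b ^ (s - r) * t ^ r) := by
        have : s - r ≤ 0 := by linarith
        gcongr (1 + b⁻¹) ^ s * (?_ * t ^ r)
        exact Real.rpow_le_rpow_of_nonpos hb hbt.le this
    _ = (1 + b⁻¹) ^ s * b ^ (s - r) * t ^ r := by ring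

theorem sq_norm_rpow_le_rpow_mul {E : Type*} [NormedAddCommGroup E] [NormedSpace ℝ E]
    {ε r : ℝ} (hε : 0 < ε) (hr : 0 ≤ r) (k : E) :
    (‖k‖ ^ 2) ^ r ≤ (ε ^ 2) ^ r * (1 + ‖ε⁻¹ • k‖ ^ 2) ^ r := by
  have hk : ‖k‖ ^ 2 = ε ^ 2 * ‖ε⁻¹ • k‖ ^ 2 := by
    rw [norm_smul, Real.norm_of_nonneg (inv_pos.2 hε).le]
    field_simp
  rw [hk, Real.mul_rpow (by positivity) (by positivity)]
  gcongr
  linarith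

theorem chi_le_one (ω : ℝ) (k : E2) : chi ω k ≤ 1 := by
  unfold chi; split_ifs <;> norm_num

def ellipticConst (ω s r : ℝ) : ℝ := (1 + (ω ^ 2 / 2)⁻¹) ^ (s / 2) * (ω ^ 2 / 2) ^ ((s - r) / 2)

theorem ellipticConst_pos {ω : ℝ} (hω : 0 < ω) (s r : ℝ) : 0 < ellipticConst ω s r := by
  unfold ellipticConst; positivity

theorem one_sub_chi_mul_rpow_le {ω s r ε : ℝ} (hω : 0 < ω) (hs : 0 ≤ s) (hsr : s ≤ r)
    (hε : 0 < ε) (k : E2) :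
    (1 - chi ω k) * (1 + ‖k‖ ^ 2) ^ (s / 2) ≤
      ellipticConst ω s r * ε ^ r * (1 + ‖ε⁻¹ • k‖ ^ 2) ^ (r / 2) := by
  by_cases hk : ‖k‖ ^ 2 ≤ ω ^ 2 / 2
  · rw [chi, if_pos hk, sub_self, zero_mul]
    have := ellipticConst_pos hω s r
    positivity
  · rw [chi, if_neg hk, sub_zero, one_mul]
    have hε_pow : (ε ^ 2) ^ (r / 2) = ε ^ r := by
      rw [← Real.rpow_natCast, ← Real.rpow_mul hε.le, Nat.cast_ofNat,
        mul_div_cancel₀ r two_ne_zero]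
    calc (1 + ‖k‖ ^ 2) ^ (s / 2)
        ≤ (1 + (ω ^ 2 / 2)⁻¹) ^ (s / 2) * (ω ^ 2 / 2) ^ (s / 2 - r / 2) * (‖k‖ ^ 2) ^ (r / 2) :=
          one_add_rpow_le_mul_rpow_of_lt (by positivity) (not_le.1 hk) (by positivity)
            (by linarith)
      _ ≤ _ := by
          rw [ellipticConst, ← sub_div, mul_assoc _ (ε ^ r), ← hε_pow]
          gcongr
          exact sq_norm_rpow_le_rpow_mul hε (by linarith) k

theorem eLpNorm_comp_const_smul {E F : Type*} [NormedAddCommGroup E] [NormedSpace ℝ E]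
    [MeasurableSpace E] [BorelSpace E] [FiniteDimensional ℝ E] (μ : Measure E)
    [μ.IsAddHaarMeasure] [TopologicalSpace F] [ContinuousENorm F] {r : ℝ} (hr : r ≠ 0)
    {p : ℝ≥0∞} (hp : p ≠ ∞) (g : E → F) :
    eLpNorm (fun x => g (r • x)) p μ =
      ENNReal.ofReal |(r ^ Module.finrank ℝ E)⁻¹| ^ (1 / p).toReal * eLpNorm g p μ := by
  change eLpNorm (g ∘ (r • ·)) p μ = _
  rw [← (measurableEmbedding_const_smul₀ hr).eLpNorm_map_measure, Measure.map_addHaar_smul μ hr,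
    eLpNorm_smul_measure_of_ne_top hp, smul_eq_mul]

theorem eLpNorm_comp_inv_smul_plane {F : Type*} [NormedAddCommGroup F] {ε : ℝ} (hε : 0 < ε)
    (g : E2 → F) :
    eLpNorm (fun k : E2 => g (ε⁻¹ • k)) 2 volume = ENNReal.ofReal ε * eLpNorm g 2 volume := by
  rw [eLpNorm_comp_const_smul volume (inv_ne_zero hε.ne') ENNReal.ofNat_ne_top,
    finrank_euclideanSpace_fin, inv_pow, inv_inv, abs_of_pos (by positivity),
    ENNReal.ofReal_rpow_of_pos (by positivity)]
  congr 2
  rw [← Real.rpow_natCast, ← Real.rpow_mul hε.le]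
  norm_num

theorem norm_elliptic_part_le {ω s r ε : ℝ} (hω : 0 < ω) (hs : 0 ≤ s) (hsr : s ≤ r)
    (hε : 0 < ε) (v : E2 → ℂ) {u : ℂ} (hu : ‖u‖ = 1) (k : E2) :
    ‖((1 + ‖k‖ ^ 2) ^ (s / 2) : ℝ) • ((1 - chi ω k : ℝ) • ((ε ^ 2)⁻¹ • v (ε⁻¹ • k) * u))‖ ≤
      ‖(ellipticConst ω s r * ε ^ (r - 2)) •
        (((1 + ‖ε⁻¹ • k‖ ^ 2) ^ (r / 2) : ℝ) • v (ε⁻¹ • k))‖ := by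
  have hchi : 0 ≤ 1 - chi ω k := sub_nonneg.2 (chi_le_one ω k)
  have hε_pow : ε ^ r * (ε ^ 2)⁻¹ = ε ^ (r - 2) := by
    rw [Real.rpow_sub hε, Real.rpow_two, div_eq_mul_inv]
  have hC := ellipticConst_pos hω s r
  rw [norm_smul, norm_smul, norm_mul, norm_smul, hu, mul_one, norm_smul, norm_smul,
    Real.norm_of_nonneg hchi, Real.norm_of_nonneg (by positivity),
    Real.norm_of_nonneg (by positivity), Real.norm_of_nonneg (by positivity),
    Real.norm_of_nonneg (by positivity)]
  calc (1 + ‖k‖ ^ 2) ^ (s / 2) * ((1 - chi ω k) * ((ε ^ 2)⁻¹ * ‖v (ε⁻¹ • k)‖))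
      = (1 - chi ω k) * (1 + ‖k‖ ^ 2) ^ (s / 2) * ((ε ^ 2)⁻¹ * ‖v (ε⁻¹ • k)‖) := by ring
    _ ≤ ellipticConst ω s r * ε ^ r * (1 + ‖ε⁻¹ • k‖ ^ 2) ^ (r / 2) *
          ((ε ^ 2)⁻¹ * ‖v (ε⁻¹ • k)‖) := by
        gcongr ?_ * _
        exact one_sub_chi_mul_rpow_le hω hs hsr hε k
    _ = _ := by rw [← hε_pow]; ring

theorem elliptic_part_small_general (ω kz : ℝ) (hω : 0 < ω)
    (s sA : ℕ) (hsA : s ≤ sA) :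
    ∃ C : ℝ, 0 < C ∧ ∀ ε : ℝ, ε ∈ Set.Ioo (0 : ℝ) 1 → ∀ z : ℝ, ∀ W : E2 → ℂ,
      eLpNorm (fun k : E2 =>
          ((1 + ‖k‖ ^ 2) ^ ((s : ℝ) / 2) : ℝ) •
            (((1 - chi ω k : ℝ)) •
              ((ε ^ 2)⁻¹ • 𝓕 W (ε⁻¹ • k) * Complex.exp (I * kz * z)))) 2 volume
        ≤ ENNReal.ofReal (C * ε ^ ((sA : ℝ) - 1)) * hsNorm sA W := by
  set C := ellipticConst ω s sA
  refine ⟨C, ellipticConst_pos hω s sA, fun ε ⟨hε, _⟩ z W => ?_⟩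
  have hphase : ‖Complex.exp (I * kz * z)‖ = 1 := by
    simp [Complex.norm_exp]
  have hc : 0 ≤ C * ε ^ ((sA : ℝ) - 2) :=
    mul_nonneg (ellipticConst_pos hω s sA).le (Real.rpow_nonneg hε.le _)
  calc _ ≤ eLpNorm ((C * ε ^ ((sA : ℝ) - 2)) • fun k : E2 =>
            ((1 + ‖ε⁻¹ • k‖ ^ 2) ^ ((sA : ℝ) / 2) : ℝ) • 𝓕 W (ε⁻¹ • k)) 2 volume :=
        eLpNorm_mono fun k => norm_elliptic_part_le hω (Nat.cast_nonneg s)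
          (Nat.cast_le.2 hsA) hε (𝓕 W) hphase k
    _ = ENNReal.ofReal (C * ε ^ ((sA : ℝ) - 2)) * (ENNReal.ofReal ε * hsNorm sA W) := by
        rw [eLpNorm_const_smul, Real.enorm_of_nonneg hc, hsNorm,
          ← eLpNorm_comp_inv_smul_plane hε]
    _ = ENNReal.ofReal (C * ε ^ ((sA : ℝ) - 1)) * hsNorm sA W := by
        rw [← mul_assoc, ← ENNReal.ofReal_mul hc, mul_assoc, ← Real.rpow_add_one hε.ne',
          show (sA : ℝ) - 2 + 1 = sA - 1 by ring]

/-- For the Schrödinger approximation `ψ_app(x,y,z) = e^{i k_z z} w(εx,εy,ε²z)`, whose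
Fourier transform in `(x,y)` is `ε⁻² ŵ(k/ε, ε²z) e^{i k_z z}`, the elliptic part
satisfies `‖(I - P_hyp) ψ_app(·,·,z)‖_{H^s} ≤ C ε^{s_A-1} ‖w(·,ε²z)‖_{H^{s_A}}`, with
`C` independent of `ε ∈ (0,1)` and of `z`.  Here `W = w(·, ε²z)` denotes the relevant
slice of `w`, and the `H^s` norm of `(I - P_hyp) ψ_app` is computed on the Fourier
side via the multiplier `1 - χ`. -/
theorem elliptic_part_small (ω kz : ℝ) (hω : 0 < ω) (hkz : kz ^ 2 = ω ^ 2)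
    (s sA : ℕ) (hsA : s ≤ sA) :
    ∃ C : ℝ, 0 < C ∧ ∀ ε : ℝ, ε ∈ Set.Ioo (0 : ℝ) 1 → ∀ z : ℝ, ∀ W : E2 → ℂ,
      eLpNorm (fun k : E2 =>
          ((1 + ‖k‖ ^ 2) ^ ((s : ℝ) / 2) : ℝ) •
            (((1 - chi ω k : ℝ)) •
              ((ε ^ 2)⁻¹ • 𝓕 W (ε⁻¹ • k) * Complex.exp (I * kz * z)))) 2 volume
        ≤ ENNReal.ofReal (C * ε ^ ((sA : ℝ) - 1)) * hsNorm sA W :=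
  elliptic_part_small_general ω kz hω s sA hsA
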